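/- arXiv:2605.07427 — 2 statements merged into one kernel-verified Lean document; each statement's English description precedes it below -/
import Mathlib

section
/- For L > 0 and V > 0 let I_{L,V} be the set of nondecreasing functions w : [0,L] → [0,V]. Then for every ε with 0 < ε ≤ LV/6, the set I_{L,V}, viewed as a subset of L¹([0,L]), can be covered by at most 2^{4LV/ε} sets of L¹-diameter at most 2ε. Equivalently, its Kolmogorov ε-entropy in L¹([0,L]) is at most 4LV/ε. -/
/-!
Sample `w` at the `n ≈ 2LV/ε` grid points `kL/n` and round the samples down to multiples of
`V/n`. On each grid cell a monotone function stays between its values at the endpoints, so two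
functions with the same rounded samples are `L¹`-close up to `(L/n)` times the sum of their
total increases plus `V`, i.e. up to `3LV/n ≤ 2ε`. The rounded samples form a nondecreasing
sequence of length `n` with values in `{0, …, n}`, and `k ↦ level_k + k` encodes it injectively
as a subset of `{0, …, 2n - 1}`, leaving at most `2^(2n) ≤ 2^(4LV/ε)` classes.
-/

open MeasureTheory Set

lemma exists_finset_cover_of_code {α β : Type*} {K : Set α} {S : Finset β} {code : α → β}
    (hcode : MapsTo code K S) (P : α → α → Prop)
    (hP : ∀ w ∈ K, ∀ w' ∈ K, code w = code w' → P w w') :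
    ∃ 𝒢 : Finset (Set α), 𝒢.card ≤ S.card ∧ (∀ U ∈ 𝒢, ∀ w ∈ U, ∀ w' ∈ U, P w w') ∧
      K ⊆ ⋃ U ∈ 𝒢, U := by
  classical
  refine ⟨S.image fun s => {w ∈ K | code w = s}, Finset.card_image_le, ?_, fun w hw => ?_⟩
  · simp only [Finset.mem_image]
    rintro _ ⟨s, -, rfl⟩ w ⟨hw, rfl⟩ w' ⟨hw', hcode'⟩
    exact hP w hw w' hw' hcode'.symm
  · exact mem_biUnion (Finset.mem_image_of_mem _ (hcode hw)) ⟨hw, rfl⟩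

section Encoding

variable {n m : ℕ} {f g : Fin n → ℕ}

lemma image_add_val_mem_powerset_range (hf : ∀ k, f k ≤ m) :
    Finset.univ.image (fun k => f k + k) ∈ (Finset.range (n + m)).powerset := by
  simp only [Finset.mem_powerset, Finset.image_subset_iff, Finset.mem_univ, Finset.mem_range,
    forall_const]
  intro k
  have := hf k
  have := k.isLt
  omega

lemma Monotone.strictMono_add_val (hf : Monotone f) : StrictMono fun k => f k + (k : ℕ) :=
  fun _ _ hij => add_lt_add_of_le_of_lt (hf hij.le) hij

lemma Monotone.eq_of_image_add_val_eq (hf : Monotone f) (hg : Monotone g)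
    (h : Finset.univ.image (fun k => f k + k) = Finset.univ.image (fun k => g k + k)) :
    f = g := by
  have hrange := congrArg (fun s : Finset ℕ => (s : Set ℕ)) h
  simp only [Finset.coe_image, Finset.coe_univ, image_univ] at hrange
  funext k
  simpa using congrFun ((hf.strictMono_add_val.range_inj hg.strictMono_add_val).1 hrange) k

end Encoding

lemma abs_sub_lt_one_of_natFloor_eq {a b : ℝ} (ha : 0 ≤ a) (hb : 0 ≤ b) (h : ⌊a⌋₊ = ⌊b⌋₊) :
    |a - b| < 1 := by
  have hfa := Nat.floor_le ha
  have hfb := Nat.floor_le hb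
  have hla := Nat.lt_floor_add_one a
  have hlb := Nat.lt_floor_add_one b
  rw [h] at hfa hla
  rw [abs_sub_lt_iff]
  constructor <;> linarith

lemma abs_sub_le_of_floor_mul_div_eq {a b V : ℝ} {n : ℕ} (hV : 0 < V) (hn : 0 < n)
    (ha : 0 ≤ a) (hb : 0 ≤ b) (h : ⌊a * n / V⌋₊ = ⌊b * n / V⌋₊) : |a - b| ≤ V / n := by
  have hn' : (0 : ℝ) < n := by exact_mod_cast hn
  have h1 := abs_sub_lt_one_of_natFloor_eq (by positivity) (by positivity) h
  rw [← sub_div, ← sub_mul, abs_div, abs_mul, abs_of_pos hV, abs_of_pos hn',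
    div_lt_one hV] at h1
  rw [le_div_iff₀ hn']
  exact h1.le

lemma intervalIntegral_abs_sub_le_of_monotoneOn {w w' : ℝ → ℝ} {a b : ℝ} (hab : a ≤ b)
    (hw : MonotoneOn w (Icc a b)) (hw' : MonotoneOn w' (Icc a b)) :
    ∫ t in a..b, |w t - w' t| ≤ (b - a) * (w b - w a + (w' b - w' a) + |w a - w' a|) := by
  have ha : a ∈ Icc a b := left_mem_Icc.2 hab
  have hb : b ∈ Icc a b := right_mem_Icc.2 hab
  have hint : IntervalIntegrable (fun t => |w t - w' t|) volume a b :=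
    ((hw.mono (uIcc_of_le hab).subset).intervalIntegrable.sub
      (hw'.mono (uIcc_of_le hab).subset).intervalIntegrable).abs
  calc ∫ t in a..b, |w t - w' t|
      ≤ ∫ _ in a..b, (w b - w a + (w' b - w' a) + |w a - w' a|) := by
        refine intervalIntegral.integral_mono_on hab hint intervalIntegrable_const fun t ht => ?_
        have := hw ha ht ht.1
        have := hw ht hb ht.2
        have := hw' ha ht ht.1
        have := hw' ht hb ht.2
        have := abs_le.1 (le_refl |w a - w' a|)
        rw [abs_le]
        constructor <;> linarith
    _ = (b - a) * (w b - w a + (w' b - w' a) + |w a - w' a|) := by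
        rw [intervalIntegral.integral_const, smul_eq_mul]

lemma integral_abs_sub_le_of_grid {w w' : ℝ → ℝ} {L δ : ℝ} {n : ℕ} (hL : 0 ≤ L) (hn : 0 < n)
    (hw : MonotoneOn w (Icc 0 L)) (hw' : MonotoneOn w' (Icc 0 L))
    (hδ : ∀ k < n, |w (k * (L / n)) - w' (k * (L / n))| ≤ δ) :
    ∫ t in Icc 0 L, |w t - w' t| ≤ L / n * (w L - w 0 + (w' L - w' 0)) + L * δ := by
  set x : ℕ → ℝ := fun k => k * (L / n)
  have hn' : (0 : ℝ) < n := by exact_mod_cast hn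
  have hx0 : x 0 = 0 := by simp [x]
  have hxn : x n = L := by simp only [x]; field_simp
  have hstep : ∀ k, x (k + 1) - x k = L / n := fun k => by simp only [x]; push_cast; ring
  have hxmono : Monotone x := fun i j hij => by simp only [x]; gcongr
  have hpiece : ∀ k < n, Icc (x k) (x (k + 1)) ⊆ Icc 0 L := fun k hk =>
    Icc_subset_Icc (hx0 ▸ hxmono k.zero_le) (hxn ▸ hxmono hk)
  have hxle : ∀ k, x k ≤ x (k + 1) := fun k => hxmono k.le_succ
  have hsum := intervalIntegral.sum_integral_adjacent_intervals (f := fun t => |w t - w' t|)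
    (μ := volume) (a := x) (n := n) fun k hk =>
      (((hw.mono ((uIcc_of_le (hxle k)).subset.trans (hpiece k hk))).intervalIntegrable).sub
        (hw'.mono ((uIcc_of_le (hxle k)).subset.trans (hpiece k hk))).intervalIntegrable).abs
  have hIcc : ∫ t in Icc 0 L, |w t - w' t| = ∫ t in x 0..x n, |w t - w' t| := by
    rw [hx0, hxn, intervalIntegral.integral_of_le hL, integral_Icc_eq_integral_Ioc]
  rw [hIcc, ← hsum]
  calc ∑ k ∈ Finset.range n, ∫ t in x k..x (k + 1), |w t - w' t|
      ≤ ∑ k ∈ Finset.range n,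
          L / n * (w (x (k + 1)) - w (x k) + (w' (x (k + 1)) - w' (x k)) + δ) := by
        refine Finset.sum_le_sum fun k hk => ?_
        have hk := Finset.mem_range.1 hk
        refine (intervalIntegral_abs_sub_le_of_monotoneOn (hxle k) (hw.mono (hpiece k hk))
          (hw'.mono (hpiece k hk))).trans ?_
        rw [hstep]
        gcongr
        exact hδ k hk
    _ = L / n * (w L - w 0 + (w' L - w' 0)) + L * δ := by
        rw [← Finset.mul_sum, Finset.sum_add_distrib, Finset.sum_add_distrib,
          Finset.sum_range_sub (fun k => w (x k)), Finset.sum_range_sub (fun k => w' (x k)),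
          Finset.sum_const, Finset.card_range, nsmul_eq_mul, hx0, hxn]
        field_simp

lemma exists_grid_size {L V ε : ℝ} (hε : 0 < ε) (hεLV : ε ≤ L * V / 6) :
    ∃ n : ℕ, 0 < n ∧ (2 * n : ℝ) ≤ 4 * L * V / ε ∧ 3 * (L * V) ≤ 2 * ε * n := by
  have h12 : 12 ≤ 2 * L * V / ε := by rw [le_div_iff₀ hε]; linarith
  refine ⟨⌊2 * L * V / ε⌋₊, Nat.floor_pos.2 (by linarith), ?_, ?_⟩
  · have := Nat.floor_le (show 0 ≤ 2 * L * V / ε by linarith)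
    linarith [show 4 * L * V / ε = 2 * (2 * L * V / ε) by ring]
  · have h := Nat.sub_one_lt_floor (2 * L * V / ε)
    rw [sub_lt_iff_lt_add, div_lt_iff₀ hε] at h
    linarith

lemma natCast_mul_div_mem_Icc {L : ℝ} {n k : ℕ} (hL : 0 ≤ L) (hk : k < n) :
    k * (L / n) ∈ Icc 0 L := by
  have hn : (0 : ℝ) < n := by exact_mod_cast k.zero_le.trans_lt hk
  refine ⟨by positivity, ?_⟩
  calc k * (L / n) ≤ n * (L / n) := by gcongr
    _ = L := by field_simp

noncomputable def level (L V : ℝ) (n : ℕ) (w : ℝ → ℝ) (k : Fin n) : ℕ :=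
  ⌊w (k * (L / n)) * n / V⌋₊

def monotoneClass (L V : ℝ) : Set (ℝ → ℝ) :=
  {w | MonotoneOn w (Icc 0 L) ∧ ∀ x ∈ Icc 0 L, w x ∈ Icc 0 V}

section Level

variable {L V : ℝ} {n : ℕ} {w w' : ℝ → ℝ}

lemma monotone_level (hL : 0 ≤ L) (hV : 0 < V) (hw : MonotoneOn w (Icc 0 L)) :
    Monotone (level L V n w) := fun i j hij => by
  have := hw (natCast_mul_div_mem_Icc hL i.isLt) (natCast_mul_div_mem_Icc hL j.isLt)
    (by gcongr; exact_mod_cast hij)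
  unfold level
  gcongr

lemma level_le (hL : 0 ≤ L) (hV : 0 < V) (hw : ∀ x ∈ Icc 0 L, w x ∈ Icc 0 V) (k : Fin n) :
    level L V n w k ≤ n := by
  have := (hw _ (natCast_mul_div_mem_Icc hL k.isLt)).2
  refine Nat.floor_le_of_le ?_
  rw [div_le_iff₀ hV, mul_comm]
  gcongr

lemma integral_abs_sub_le_of_level_eq (hL : 0 ≤ L) (hV : 0 < V) (hn : 0 < n)
    (hw : w ∈ monotoneClass L V) (hw' : w' ∈ monotoneClass L V)
    (hlevel : level L V n w = level L V n w') :
    ∫ x in Icc 0 L, |w x - w' x| ≤ 3 * (L * V) / n := by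
  have hclose : ∀ k < n, |w (k * (L / n)) - w' (k * (L / n))| ≤ V / n := fun k hk =>
    abs_sub_le_of_floor_mul_div_eq hV hn (hw.2 _ (natCast_mul_div_mem_Icc hL hk)).1
      (hw'.2 _ (natCast_mul_div_mem_Icc hL hk)).1 (congrFun hlevel ⟨k, hk⟩)
  have hwL := (hw.2 L (right_mem_Icc.2 hL)).2
  have hw0 := (hw.2 0 (left_mem_Icc.2 hL)).1
  have hw'L := (hw'.2 L (right_mem_Icc.2 hL)).2
  have hw'0 := (hw'.2 0 (left_mem_Icc.2 hL)).1
  calc ∫ x in Icc 0 L, |w x - w' x|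
      ≤ L / n * (w L - w 0 + (w' L - w' 0)) + L * (V / n) :=
        integral_abs_sub_le_of_grid hL hn hw.1 hw'.1 hclose
    _ ≤ L / n * (V + V) + L * (V / n) := by gcongr <;> linarith
    _ = 3 * (L * V) / n := by ring

end Level

/-- De Lellis–Golse entropy bound: the class of nondecreasing functions `[0,L] → [0,V]`
can be covered, in the `L¹([0,L])` distance, by at most `2^(4LV/ε)` sets of
`L¹`-diameter at most `2ε`, whenever `0 < ε ≤ LV/6`. -/
theorem entropy_bound_monotone_class (L V ε : ℝ) (hL : 0 < L) (hV : 0 < V)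
    (hε : 0 < ε) (hεLV : ε ≤ L * V / 6) :
    ∃ 𝒢 : Finset (Set (ℝ → ℝ)),
      (𝒢.card : ℝ) ≤ 2 ^ (4 * L * V / ε) ∧
      (∀ U ∈ 𝒢, ∀ w ∈ U, ∀ w' ∈ U,
        ∫ x in Set.Icc (0:ℝ) L, |w x - w' x| ≤ 2 * ε) ∧
      {w : ℝ → ℝ | MonotoneOn w (Set.Icc 0 L) ∧
          ∀ x ∈ Set.Icc (0:ℝ) L, w x ∈ Set.Icc (0:ℝ) V} ⊆ ⋃ U ∈ 𝒢, U := by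
  obtain ⟨n, hn, hcard, hfine⟩ := exists_grid_size hε hεLV
  obtain ⟨𝒢, h𝒢card, h𝒢diam, h𝒢cover⟩ := exists_finset_cover_of_code (K := monotoneClass L V)
    (S := (Finset.range (n + n)).powerset)
    (code := fun w => Finset.univ.image fun k => level L V n w k + k)
    (fun w hw => image_add_val_mem_powerset_range (level_le hL.le hV hw.2))
    (fun w w' => ∫ x in Icc 0 L, |w x - w' x| ≤ 2 * ε)
    fun w hw w' hw' hcode => by
      refine (integral_abs_sub_le_of_level_eq hL.le hV hn hw hw'
        ((monotone_level hL.le hV hw.1).eq_of_image_add_val_eq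
          (monotone_level hL.le hV hw'.1) hcode)).trans ?_
      rw [div_le_iff₀ (by exact_mod_cast hn)]
      linarith
  refine ⟨𝒢, ?_, h𝒢diam, h𝒢cover⟩
  rw [Finset.card_powerset, Finset.card_range] at h𝒢card
  calc (𝒢.card : ℝ) ≤ (2 : ℝ) ^ ((n + n : ℕ) : ℝ) := by
        rw [Real.rpow_natCast]; exact_mod_cast h𝒢card
    _ ≤ 2 ^ (4 * L * V / ε) :=
        Real.rpow_le_rpow_of_exponent_le one_le_two (by push_cast; linarith)
end

section
/- L¹-contraction of monotone conservative schemes implies L¹-stability: suppose the map T : ℝ^ℤ → ℝ^ℤ, (Tu)_j = u_j − λ[g(u_{j+1},u_j) − g(u_j,u_{j−1})], is monotone (u_j ≤ v_j for all j implies (Tu)_j ≤ (Tv)_j), conservative, and T(0) = 0. Then for every compactly supported sequence u, Σ_j |(Tu)_j| ≤ Σ_j |u_j|. -/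
/-!
Split `u = u ⊔ 0 + u ⊓ 0`. Monotonicity and `T 0 = 0` give
`T (u ⊓ 0) ≤ min (T u) 0` and `max (T u) 0 ≤ T (u ⊔ 0)`, hence
`|T u| ≤ T (u ⊔ 0) - T (u ⊓ 0)` pointwise. Summing, and using that the scheme preserves sums
because the flux differences telescope, gives `∑ |T u| ≤ ∑ (u ⊔ 0) - ∑ (u ⊓ 0) = ∑ |u|`.
-/

theorem hasSum_sub_comp_sub_one {α : Type*} [AddCommGroup α] [TopologicalSpace α]
    [IsTopologicalAddGroup α] {F : ℤ → α} (hF : Summable F) :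
    HasSum (fun j => F j - F (j - 1)) 0 := by
  have hshift : HasSum (fun j => F (j - 1)) (∑' j, F j) :=
    (Equiv.subRight (1 : ℤ)).hasSum_iff.mpr hF.hasSum
  simpa using hF.hasSum.sub hshift

theorem abs_apply_le_sub_of_monotone {ι : Type*} {T : (ι → ℝ) → ι → ℝ} (hT : Monotone T)
    (hT0 : T 0 = 0) (u : ι → ℝ) (j : ι) :
    |T u j| ≤ T (u ⊔ 0) j - T (u ⊓ 0) j := by
  have hle_pos : T u j ≤ T (u ⊔ 0) j := hT le_sup_left j
  have hneg_le : T (u ⊓ 0) j ≤ T u j := hT inf_le_left j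
  have hpos_nonneg : 0 ≤ T (u ⊔ 0) j := by
    simpa [hT0] using hT (le_sup_right : (0 : ι → ℝ) ≤ u ⊔ 0) j
  have hneg_nonpos : T (u ⊓ 0) j ≤ 0 := by
    simpa [hT0] using hT (inf_le_right : u ⊓ 0 ≤ 0) j
  rw [abs_le]
  constructor <;> linarith

theorem tsum_abs_le_of_monotone_of_hasSum {ι : Type*} {T : (ι → ℝ) → ι → ℝ}
    (hT : Monotone T) (hT0 : T 0 = 0)
    (hcons : ∀ v : ι → ℝ, v.support.Finite → HasSum (T v) (∑' j, v j))
    {u : ι → ℝ} (hu : u.support.Finite) :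
    ∑' j, |T u j| ≤ ∑' j, |u j| := by
  have hpos : (u ⊔ 0).support.Finite := hu.subset fun j hj h => hj (by simp [h])
  have hneg : (u ⊓ 0).support.Finite := hu.subset fun j hj h => hj (by simp [h])
  have hsplit := (hcons _ hpos).sub (hcons _ hneg)
  have hbound := abs_apply_le_sub_of_monotone hT hT0 u
  have habs : HasSum (fun j => |u j|) (∑' j, (u ⊔ 0) j - ∑' j, (u ⊓ 0) j) := by
    have hu_eq : (fun j => |u j|) = fun j => (u ⊔ 0) j - (u ⊓ 0) j :=
      funext fun j => by simp [max_sub_min_eq_abs]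
    rw [hu_eq]
    exact (summable_of_hasFiniteSupport hpos).hasSum.sub
      (summable_of_hasFiniteSupport hneg).hasSum
  rw [habs.tsum_eq]
  exact hasSum_le hbound
    (hsplit.summable.of_nonneg_of_le (fun _ => abs_nonneg _) hbound).hasSum hsplit

def conservativeUpdate (lam : ℝ) (g : ℝ → ℝ → ℝ) (u : ℤ → ℝ) (j : ℤ) : ℝ :=
  u j - lam * (g (u (j + 1)) (u j) - g (u j) (u (j - 1)))

theorem hasSum_conservativeUpdate (lam : ℝ) {g : ℝ → ℝ → ℝ} (hg : g 0 0 = 0) {u : ℤ → ℝ}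
    (hu : u.support.Finite) : HasSum (conservativeUpdate lam g u) (∑' j, u j) := by
  set flux : ℤ → ℝ := fun j => g (u (j + 1)) (u j)
  have hflux : flux.support.Finite := by
    refine ((hu.preimage (add_left_injective 1).injOn).union hu).subset fun j hj => ?_
    by_contra h
    simp_all [flux]
  have hdiff := (hasSum_sub_comp_sub_one (summable_of_hasFiniteSupport hflux)).mul_left lam
  have hupdate : conservativeUpdate lam g u = fun j => u j - lam * (flux j - flux (j - 1)) :=
    funext fun j => by simp [conservativeUpdate, flux]
  rw [hupdate]
  simpa using (summable_of_hasFiniteSupport hu).hasSum.sub hdiff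

theorem monotone_conservative_l1_stable_general (lam : ℝ)
    (g : ℝ → ℝ → ℝ) (hg : g 0 0 = 0)
    (T : (ℤ → ℝ) → (ℤ → ℝ))
    (hT : ∀ u : ℤ → ℝ, ∀ j : ℤ,
      T u j = u j - lam * (g (u (j + 1)) (u j) - g (u j) (u (j - 1))))
    (hmono : ∀ u v : ℤ → ℝ, (∀ j, u j ≤ v j) → ∀ j, T u j ≤ T v j)
    (u : ℤ → ℝ) (hsupp : (Function.support u).Finite) :
    ∑' j : ℤ, |T u j| ≤ ∑' j : ℤ, |u j| := by
  have hT_eq : T = conservativeUpdate lam g := funext fun v => funext (hT v)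
  subst hT_eq
  refine tsum_abs_le_of_monotone_of_hasSum (fun v w hvw => hmono v w hvw) ?_
    (fun v hv => hasSum_conservativeUpdate lam hg hv) hsupp
  funext j
  simp [conservativeUpdate, hg]

/-- Crandall–Tartar type `ℓ¹`-stability: a monotone three-point conservative scheme with
flux vanishing at the origin does not increase the `ℓ¹` norm of compactly supported
data. -/
theorem monotone_conservative_l1_stable (lam : ℝ) (hlam : 0 < lam)
    (g : ℝ → ℝ → ℝ) (hg : g 0 0 = 0)
    (T : (ℤ → ℝ) → (ℤ → ℝ))
    (hT : ∀ u : ℤ → ℝ, ∀ j : ℤ,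
      T u j = u j - lam * (g (u (j + 1)) (u j) - g (u j) (u (j - 1))))
    (hmono : ∀ u v : ℤ → ℝ, (∀ j, u j ≤ v j) → ∀ j, T u j ≤ T v j)
    (u : ℤ → ℝ) (hsupp : (Function.support u).Finite) :
    ∑' j : ℤ, |T u j| ≤ ∑' j : ℤ, |u j| :=
  monotone_conservative_l1_stable_general lam g hg T hT hmono u hsupp
end
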